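/- arXiv:math/9606212 — 2 statements merged into one kernel-verified Lean document; each statement's English description precedes it below -/
import Mathlib

section
/- Let 0 → B →^i A →^j D → 0 be an extension of Banach algebras where B has a right bounded approximate identity (e_α). Then for every n, the induced map ĩ_n : CC_n(B) → CC_n(A) between cyclic quotient spaces is injective with closed range. Specifically, for every continuous trace-type functional f ∈ CC_n(B)* (i.e. f ∈ (B^⊗̂(n+1))* vanishing on Im(id − t_n)), the functional g_f(a_0 ⊗ ⋯ ⊗ a_n) = lim_{α→U} f(i^{-1}(a_0 i(e_α)) ⊗ ⋯ ⊗ i^{-1}(a_n i(e_α))) is a bounded functional on A^⊗̂(n+1) vanishing on Im(id − t_n), and (i^⊗̂(n+1))* g_f = f. -/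
open NormedSpace Filter

noncomputable section

/-- A Banach space `T` together with a bounded `n`-linear map `φ : Aⁿ → T` is *the*
`n`-fold projective tensor power `A^⊗̂n`. -/
structure IsProjectiveTensorPower
    (A : Type*) [NormedAddCommGroup A] [NormedSpace ℝ A]
    (n : ℕ)
    (T : Type*) [NormedAddCommGroup T] [NormedSpace ℝ T] [CompleteSpace T]
    (φ : ContinuousMultilinearMap ℝ (fun _ : Fin n => A) T) : Prop where
  dense : (Submodule.span ℝ (Set.range ⇑φ)).topologicalClosure = ⊤
  lift : ∀ (W : Type) [NormedAddCommGroup W] [NormedSpace ℝ W] [CompleteSpace W]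
      (m : ContinuousMultilinearMap ℝ (fun _ : Fin n => A) W),
      ∃ g : T →L[ℝ] W, (∀ v, g (φ v) = m v) ∧ ‖g‖ = ‖m‖

/-- The cyclic permutation of an elementary tensor (without the sign). -/
def cyclicShift {A : Type*} {n : ℕ} (v : Fin (n + 1) → A) : Fin (n + 1) → A :=
  fun k => v (k - 1)

/-!
The map `ĩ_n` is bounded below — hence injective with closed range — as soon as every functional
on `CC_n(B)` extends along it with control of the norm: take a norming functional `f` of `z` and an
extension `g`, then `‖z‖ = g (ĩ_n z) ≤ ‖g‖ ‖ĩ_n z‖`. The extension of a cyclic `f` is built from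
the maps `ψ_α : a ↦ i⁻¹ (a i(e_α))`, which are uniformly bounded by the open mapping theorem
(`i` is injective with closed range `Ker j`) and satisfy `ψ_α (i b) = b e_α → b`. The
multilinear forms `f (φ_B (ψ_α a₀, …, ψ_α a_n))` are uniformly bounded, so they converge along
the ultrafilter `U` to a bounded multilinear form, which lifts to `A^⊗̂(n+1)`. Cyclicity
passes to the limit, and on `i(B)` the limit is `f` because `ψ_α ∘ i → id`.
-/

open Topology

section QuotientDual

variable {X Y : Type*} [NormedAddCommGroup X] [NormedSpace ℝ X]
  [NormedAddCommGroup Y] [NormedSpace ℝ Y]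

theorem abs_apply_le_norm_mul_norm_mk {S : Submodule ℝ Y} (g : StrongDual ℝ Y)
    (hg : ∀ s ∈ S, g s = 0) (y : Y) :
    |g y| ≤ ‖g‖ * ‖(Submodule.Quotient.mk y : Y ⧸ S)‖ :=
  (QuotientAddGroup.norm_lift_apply_le (S := S.toAddSubgroup)
    ((g : Y →+ ℝ).mkNormedAddGroupHom ‖g‖ g.le_opNorm) hg (Submodule.Quotient.mk y)).trans
    (mul_le_mul_of_nonneg_right
      (AddMonoidHom.mkNormedAddGroupHom_norm_le _ (norm_nonneg _) _) (norm_nonneg _))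

theorem forall_mem_closure_range_id_sub_iff (t : X →L[ℝ] X) (g : StrongDual ℝ X) :
    (∀ s ∈ (LinearMap.range ((ContinuousLinearMap.id ℝ X - t : X →L[ℝ] X) :
        X →ₗ[ℝ] X)).topologicalClosure, g s = 0) ↔ ∀ x, g (x - t x) = 0 := by
  constructor
  · intro h x
    exact h _ (Submodule.le_topologicalClosure _ ⟨x, rfl⟩)
  · intro h s hs
    refine Submodule.topologicalClosure_minimal _ (t := LinearMap.ker (g : X →ₗ[ℝ] ℝ)) ?_
      g.isClosed_ker hs
    rintro _ ⟨x, rfl⟩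
    exact h x

section InducedMap

variable {S : Submodule ℝ X} {S' : Submodule ℝ Y} (T : X →L[ℝ] Y) (Ttil : X ⧸ S →ₗ[ℝ] Y ⧸ S')

theorem Submodule.Quotient.continuous_of_mk_eq
    (hT : ∀ x, Ttil (Submodule.Quotient.mk x) = Submodule.Quotient.mk (T x)) :
    Continuous Ttil := by
  refine S.isQuotientMap_mkQL.continuous_iff.2 ?_
  rw [show ⇑Ttil ∘ S.mkQL = S'.mkQL ∘ T from funext hT]
  exact S'.mkQL.continuous.comp T.continuous

theorem Submodule.Quotient.norm_le_of_dual_extension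
    (hT : ∀ x, Ttil (Submodule.Quotient.mk x) = Submodule.Quotient.mk (T x))
    [IsClosed (S : Set X)] {C : ℝ}
    (hext : ∀ f : StrongDual ℝ X, (∀ s ∈ S, f s = 0) → ‖f‖ ≤ 1 →
      ∃ g : StrongDual ℝ Y, (∀ s ∈ S', g s = 0) ∧ (∀ x, g (T x) = f x) ∧ ‖g‖ ≤ C)
    (z : X ⧸ S) : ‖z‖ ≤ C * ‖Ttil z‖ := by
  obtain ⟨x, rfl⟩ := Submodule.Quotient.mk_surjective S z
  obtain ⟨f, hf1, hfx⟩ := exists_dual_vector'' ℝ (Submodule.Quotient.mk x : X ⧸ S)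
  have hfS : ∀ s ∈ S, f.comp S.mkQL s = 0 := fun s hs => by
    simp [(Submodule.Quotient.mk_eq_zero S).2 hs]
  have hf1' : ‖f.comp S.mkQL‖ ≤ 1 := ContinuousLinearMap.opNorm_le_bound _ zero_le_one fun y =>
    calc ‖f (S.mkQL y)‖ ≤ 1 * ‖(Submodule.Quotient.mk y : X ⧸ S)‖ := f.le_of_opNorm_le hf1 _
      _ ≤ 1 * ‖y‖ := by gcongr; exact Submodule.Quotient.norm_mk_le S y
  obtain ⟨g, hgS', hgT, hgC⟩ := hext _ hfS hf1'
  calc ‖(Submodule.Quotient.mk x : X ⧸ S)‖ = g (T x) := by rw [hgT]; exact hfx.symm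
    _ ≤ |g (T x)| := le_abs_self _
    _ ≤ ‖g‖ * ‖(Submodule.Quotient.mk (T x) : Y ⧸ S')‖ := abs_apply_le_norm_mul_norm_mk g hgS' _
    _ ≤ C * ‖Ttil (Submodule.Quotient.mk x)‖ := by rw [hT]; gcongr

theorem Submodule.Quotient.injective_and_isClosed_range_of_dual_extension
    (hT : ∀ x, Ttil (Submodule.Quotient.mk x) = Submodule.Quotient.mk (T x))
    [CompleteSpace X] [IsClosed (S : Set X)] [IsClosed (S' : Set Y)] {C : NNReal}
    (hext : ∀ f : StrongDual ℝ X, (∀ s ∈ S, f s = 0) → ‖f‖ ≤ 1 →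
      ∃ g : StrongDual ℝ Y, (∀ s ∈ S', g s = 0) ∧ (∀ x, g (T x) = f x) ∧ ‖g‖ ≤ C) :
    Function.Injective Ttil ∧ IsClosed (Set.range Ttil) := by
  have hanti : AntilipschitzWith C Ttil :=
    AddMonoidHomClass.antilipschitz_of_bound Ttil (norm_le_of_dual_extension T Ttil hT hext)
  exact ⟨hanti.injective, hanti.isClosed_range
    (uniformContinuous_addMonoidHom_of_continuous (continuous_of_mk_eq T Ttil hT))⟩

end InducedMap

theorem injective_and_isClosed_range_of_cyclic_dual_extension [CompleteSpace X]
    (tX : X →L[ℝ] X) (tY : Y →L[ℝ] Y) (T : X →L[ℝ] Y)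
    (Ttil : (X ⧸ (LinearMap.range ((ContinuousLinearMap.id ℝ X - tX : X →L[ℝ] X) :
        X →ₗ[ℝ] X)).topologicalClosure) →ₗ[ℝ]
      (Y ⧸ (LinearMap.range ((ContinuousLinearMap.id ℝ Y - tY : Y →L[ℝ] Y) :
        Y →ₗ[ℝ] Y)).topologicalClosure))
    (hT : ∀ x, Ttil (Submodule.Quotient.mk x) = Submodule.Quotient.mk (T x)) {C : NNReal}
    (hext : ∀ f : StrongDual ℝ X, (∀ x, f (x - tX x) = 0) → ‖f‖ ≤ 1 →
      ∃ g : StrongDual ℝ Y, (∀ y, g (y - tY y) = 0) ∧ (∀ x, g (T x) = f x) ∧ ‖g‖ ≤ C) :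
    Function.Injective Ttil ∧ IsClosed (Set.range Ttil) := by
  have := Submodule.isClosed_topologicalClosure
    (LinearMap.range ((ContinuousLinearMap.id ℝ X - tX : X →L[ℝ] X) : X →ₗ[ℝ] X))
  have := Submodule.isClosed_topologicalClosure
    (LinearMap.range ((ContinuousLinearMap.id ℝ Y - tY : Y →L[ℝ] Y) : Y →ₗ[ℝ] Y))
  refine Submodule.Quotient.injective_and_isClosed_range_of_dual_extension T Ttil hT (C := C)
    fun f hfS hf1 => ?_
  obtain ⟨g, hgt, hgT, hgC⟩ := hext f ((forall_mem_closure_range_id_sub_iff tX f).1 hfS) hf1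
  exact ⟨g, (forall_mem_closure_range_id_sub_iff tY g).2 hgt, hgT, hgC⟩

end QuotientDual

section PreimageMulRight

variable {A B : Type*} [NormedRing A] [NormedAlgebra ℝ A] [NormedRing B] [NormedAlgebra ℝ B]
  (i : B →ₐ[ℝ] A) (hideal : ∀ a b, a * i b ∈ Set.range i) {K : NNReal}
  (hK : AntilipschitzWith K i)

def preimageMulRight (b : B) : A →L[ℝ] B :=
  LinearMap.mkContinuous
    { toFun := fun a => Function.invFun i (a * i b)
      map_add' := fun a a' => hK.injective <| by
        rw [map_add, Function.invFun_eq (hideal _ _), Function.invFun_eq (hideal _ _),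
          Function.invFun_eq (hideal _ _), add_mul]
      map_smul' := fun r a => hK.injective <| by
        rw [RingHom.id_apply, map_smul, Function.invFun_eq (hideal _ _),
          Function.invFun_eq (hideal _ _), smul_mul_assoc] }
    (K * ‖i b‖) fun a =>
      calc ‖Function.invFun i (a * i b)‖ ≤ K * ‖i (Function.invFun i (a * i b))‖ :=
            ZeroHomClass.bound_of_antilipschitz i hK _
        _ ≤ K * (‖a‖ * ‖i b‖) := by
            rw [Function.invFun_eq (hideal a b)]; gcongr; exact norm_mul_le _ _
        _ = K * ‖i b‖ * ‖a‖ := by ring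

theorem preimageMulRight_apply (b : B) (a : A) :
    preimageMulRight i hideal hK b a = Function.invFun i (a * i b) := rfl

theorem preimageMulRight_apply_map (b b' : B) :
    preimageMulRight i hideal hK b (i b') = b' * b :=
  hK.injective <| by rw [preimageMulRight_apply, Function.invFun_eq (hideal _ _), map_mul]

theorem norm_preimageMulRight_le (b : B) : ‖preimageMulRight i hideal hK b‖ ≤ K * ‖i b‖ :=
  LinearMap.mkContinuous_norm_le _ (by positivity) _

end PreimageMulRight

theorem ContinuousMultilinearMap.exists_tendsto_ultrafilter_of_norm_le {𝕜 ι α : Type*}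
    [NontriviallyNormedField 𝕜] [Fintype ι] {E : ι → Type*} [∀ k, SeminormedAddCommGroup (E k)]
    [∀ k, NormedSpace 𝕜 (E k)] {F : Type*} [NormedAddCommGroup F] [NormedSpace 𝕜 F]
    [ProperSpace F] (m : α → ContinuousMultilinearMap 𝕜 E F) {C : ℝ} (hm : ∀ a, ‖m a‖ ≤ C)
    (U : Ultrafilter α) :
    ∃ m' : ContinuousMultilinearMap 𝕜 E F, ‖m'‖ ≤ C ∧
      ∀ v, Tendsto (fun a => m a v) U (𝓝 (m' v)) := by
  have hbound : ∀ a v, ‖m a v‖ ≤ C * ∏ k, ‖v k‖ := fun a => (m a).le_of_opNorm_le (hm a)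
  have hlim : ∀ v, ∃ y, Tendsto (fun a => m a v) U (𝓝 y) := fun v => by
    obtain ⟨y, -, hy⟩ := (isCompact_closedBall (0 : F) (C * ∏ k, ‖v k‖)).ultrafilter_le_nhds
      (U.map fun a => m a v) (le_principal_iff.2 <| mem_map.2 <| univ_mem' fun a =>
        mem_closedBall_zero_iff.2 (hbound a v))
    exact ⟨y, hy⟩
  choose L hL using hlim
  have hC : 0 ≤ C := (norm_nonneg _).trans (hm (nonempty_of_neBot (U : Filter α)).some)
  let mL : MultilinearMap 𝕜 E F :=
    { toFun := L
      map_update_add' := fun v k x y => tendsto_nhds_unique (hL _) <| by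
        simpa only [map_update_add] using (hL (Function.update v k x)).add (hL _)
      map_update_smul' := fun v k c x => tendsto_nhds_unique (hL _) <| by
        simpa only [map_update_smul] using (hL (Function.update v k x)).const_smul c }
  refine ⟨mL.mkContinuous C fun v => ?_, mL.mkContinuous_norm_le hC _, hL⟩
  exact le_of_tendsto (hL v).norm (Eventually.of_forall fun a => hbound a v)

namespace IsProjectiveTensorPower

variable {A : Type*} [NormedAddCommGroup A] [NormedSpace ℝ A] {n : ℕ} {T : Type*}
  [NormedAddCommGroup T] [NormedSpace ℝ T] [CompleteSpace T]
  {φ : ContinuousMultilinearMap ℝ (fun _ : Fin n => A) T}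

theorem ext (hT : IsProjectiveTensorPower A n T φ) {W : Type*} [AddCommGroup W] [Module ℝ W]
    [TopologicalSpace W] [T2Space W] {g g' : T →L[ℝ] W} (h : ∀ v, g (φ v) = g' (φ v)) :
    g = g' :=
  ContinuousLinearMap.ext_on (Submodule.dense_iff_topologicalClosure_eq_top.2 hT.dense)
    (by rintro _ ⟨v, rfl⟩; exact h v)

theorem exists_dual_tendsto (hT : IsProjectiveTensorPower A n T φ) {α : Type*}
    (m : α → ContinuousMultilinearMap ℝ (fun _ : Fin n => A) ℝ) {C : ℝ} (hm : ∀ a, ‖m a‖ ≤ C)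
    (U : Ultrafilter α) :
    ∃ g : StrongDual ℝ T, ‖g‖ ≤ C ∧ ∀ v, Tendsto (fun a => m a v) U (𝓝 (g (φ v))) := by
  obtain ⟨m', hm'C, hlim⟩ := ContinuousMultilinearMap.exists_tendsto_ultrafilter_of_norm_le m hm U
  obtain ⟨g, hgφ, hg⟩ := hT.lift ℝ m'
  exact ⟨g, hg ▸ hm'C, fun v => hgφ v ▸ hlim v⟩

end IsProjectiveTensorPower

section CyclicExtension

variable {A B : Type*} [NormedAddCommGroup A] [NormedSpace ℝ A] [NormedAddCommGroup B]
  [NormedSpace ℝ B] {n : ℕ} {TA TB : Type*} [NormedAddCommGroup TA] [NormedSpace ℝ TA]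
  [CompleteSpace TA] [NormedAddCommGroup TB] [NormedSpace ℝ TB] [CompleteSpace TB]
  {φA : ContinuousMultilinearMap ℝ (fun _ : Fin (n + 1) => A) TA}
  {φB : ContinuousMultilinearMap ℝ (fun _ : Fin (n + 1) => B) TB}
  {tA : TA →L[ℝ] TA} {tB : TB →L[ℝ] TB}

theorem exists_cyclic_extension (hTA : IsProjectiveTensorPower A (n + 1) TA φA)
    (hTB : IsProjectiveTensorPower B (n + 1) TB φB)
    (htA : ∀ v, tA (φA v) = ((-1 : ℝ) ^ n) • φA (cyclicShift v))
    (htB : ∀ v, tB (φB v) = ((-1 : ℝ) ^ n) • φB (cyclicShift v))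
    {i : B → A} {I : TB →L[ℝ] TA} (hI : ∀ v, I (φB v) = φA fun k => i (v k))
    {ι : Type*} {U : Ultrafilter ι} {ψ : ι → A →L[ℝ] B} {M : ℝ} (hψ : ∀ α, ‖ψ α‖ ≤ M)
    (hψi : ∀ b, Tendsto (fun α => ψ α (i b)) U (𝓝 b))
    (f : StrongDual ℝ TB) (hf : ∀ x, f (x - tB x) = 0) :
    ∃ g : StrongDual ℝ TA, ‖g‖ ≤ ‖f‖ * (‖φB‖ * M ^ (n + 1)) ∧ (∀ x, g (x - tA x) = 0) ∧
      (∀ x, g (I x) = f x) ∧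
      ∀ v, Tendsto (fun α => f (φB fun k => ψ α (v k))) U (𝓝 (g (φA v))) := by
  let m : ι → ContinuousMultilinearMap ℝ (fun _ : Fin (n + 1) => A) ℝ := fun α =>
    (f.compContinuousMultilinearMap φB).compContinuousLinearMap fun _ => ψ α
  have hm : ∀ α, ‖m α‖ ≤ ‖f‖ * (‖φB‖ * M ^ (n + 1)) := fun α =>
    calc ‖m α‖ ≤ ‖f.compContinuousMultilinearMap φB‖ * ∏ _k : Fin (n + 1), ‖ψ α‖ :=
          ContinuousMultilinearMap.norm_compContinuousLinearMap_le _ _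
      _ ≤ ‖f‖ * ‖φB‖ * M ^ (n + 1) := by
          rw [Finset.prod_const, Finset.card_univ, Fintype.card_fin]
          gcongr
          exacts [f.norm_compContinuousMultilinearMap_le φB, hψ α]
      _ = ‖f‖ * (‖φB‖ * M ^ (n + 1)) := mul_assoc _ _ _
  obtain ⟨g, hg, hlim⟩ := hTA.exists_dual_tendsto m hm U
  have hft : ∀ x, f (tB x) = f x := fun x => (sub_eq_zero.1 (by simpa using hf x)).symm
  have hcyc : ∀ v, (-1 : ℝ) ^ n * g (φA (cyclicShift v)) = g (φA v) := fun v =>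
    tendsto_nhds_unique ((hlim (cyclicShift v)).const_mul _) <| (hlim v).congr fun α => by
      change f (φB fun k => ψ α (v k)) = (-1) ^ n * f (φB fun k => ψ α (cyclicShift v k))
      rw [← hft, htB, map_smul, smul_eq_mul]
      rfl
  have hgt : g.comp (ContinuousLinearMap.id ℝ TA - tA) = 0 := hTA.ext fun v => by
    simp [htA, hcyc]
  have hgI : g.comp I = f := hTB.ext fun v => by
    refine tendsto_nhds_unique (by simpa [hI] using hlim fun k => i (v k)) ?_
    exact ((f.continuous.comp φB.cont).tendsto v).comp (tendsto_pi_nhds.2 fun k => hψi (v k))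
  refine ⟨g, hg, fun x => ?_, fun x => congr($hgI x), hlim⟩
  simpa using congr($hgt x)

end CyclicExtension

theorem cyclic_quotient_map_injective_closed_range_general
    {B A D : Type*}
    [NormedRing B] [NormedAlgebra ℝ B] [CompleteSpace B]
    [NormedRing A] [NormedAlgebra ℝ A] [CompleteSpace A]
    [NormedRing D] [NormedAlgebra ℝ D]
    (i : B →ₐ[ℝ] A) (j : A →ₐ[ℝ] D)
    (hi_cont : Continuous i) (hj_cont : Continuous j)
    (hi : Function.Injective i)
    (hexact : ∀ a : A, j a = 0 ↔ ∃ b, i b = a)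
    -- the right bounded approximate identity and an ultrafilter refining the net filter
    {ι : Type} (l : Filter ι) [l.NeBot] (e : ι → B)
    (hbdd : ∃ C : ℝ, ∀ α, ‖e α‖ ≤ C)
    (hbai : ∀ b : B, Tendsto (fun α => b * e α) l (nhds b))
    (U : Ultrafilter ι) (hU : l ≤ ↑U)
    (n : ℕ)
    {TB TA : Type*}
    [NormedAddCommGroup TB] [NormedSpace ℝ TB] [CompleteSpace TB]
    [NormedAddCommGroup TA] [NormedSpace ℝ TA] [CompleteSpace TA]
    (φB : ContinuousMultilinearMap ℝ (fun _ : Fin (n + 1) => B) TB)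
    (hTB : IsProjectiveTensorPower B (n + 1) TB φB)
    (φA : ContinuousMultilinearMap ℝ (fun _ : Fin (n + 1) => A) TA)
    (hTA : IsProjectiveTensorPower A (n + 1) TA φA)
    -- the signed cyclic operators
    (tB : TB →L[ℝ] TB)
    (htB : ∀ v : Fin (n + 1) → B, tB (φB v) = ((-1 : ℝ) ^ n) • φB (cyclicShift v))
    (tA : TA →L[ℝ] TA)
    (htA : ∀ v : Fin (n + 1) → A, tA (φA v) = ((-1 : ℝ) ^ n) • φA (cyclicShift v))
    -- the map i^⊗̂(n+1)
    (I : TB →L[ℝ] TA) (hI : ∀ v : Fin (n + 1) → B, I (φB v) = φA fun k => i (v k))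
    -- the induced map ĩ_n between the cyclic quotient spaces
    (Itil : (TB ⧸ (LinearMap.range ((ContinuousLinearMap.id ℝ TB - tB : TB →L[ℝ] TB) : TB →ₗ[ℝ] TB)).topologicalClosure) →ₗ[ℝ]
            (TA ⧸ (LinearMap.range ((ContinuousLinearMap.id ℝ TA - tA : TA →L[ℝ] TA) : TA →ₗ[ℝ] TA)).topologicalClosure))
    (hItil : ∀ x : TB, Itil (Submodule.Quotient.mk x) = Submodule.Quotient.mk (I x)) :
    Function.Injective Itil ∧ IsClosed (Set.range Itil) ∧
    ∀ f : StrongDual ℝ TB, (∀ x : TB, f (x - tB x) = 0) →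
      ∃ g : StrongDual ℝ TA,
        (∀ x : TA, g (x - tA x) = 0) ∧
        (∀ x : TB, g (I x) = f x) ∧
        (∀ v : Fin (n + 1) → A,
          Tendsto
            (fun α => f (φB fun k => Function.invFun i (v k * i (e α))))
            (U : Filter ι) (nhds (g (φA v)))) := by
  let iL : B →L[ℝ] A := ⟨i.toLinearMap, hi_cont⟩
  have hrange : Set.range iL = j ⁻¹' {0} := Set.ext fun a => (hexact a).symm
  obtain ⟨K, hK⟩ := iL.antilipschitz_of_injective_of_isClosed_range hi
    (hrange ▸ isClosed_singleton.preimage hj_cont)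
  have hideal : ∀ a b, a * i b ∈ Set.range i := fun a b =>
    (hexact _).1 (by rw [map_mul, (hexact _).2 ⟨b, rfl⟩, mul_zero])
  obtain ⟨C, hC⟩ := hbdd
  have hC0 : 0 ≤ C := (norm_nonneg _).trans (hC (nonempty_of_neBot (U : Filter ι)).some)
  let ψ := fun α => preimageMulRight i hideal hK (e α)
  have hψ : ∀ α, ‖ψ α‖ ≤ K * (‖iL‖ * C) := fun α =>
    (norm_preimageMulRight_le i hideal hK (e α)).trans (by gcongr; exact iL.le_opNorm_of_le (hC α))
  have hψi : ∀ b, Tendsto (fun α => ψ α (i b)) U (𝓝 b) := fun b =>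
    ((hbai b).mono_left (U.unique hU).ge).congr fun α =>
      (preimageMulRight_apply_map i hideal hK _ _).symm
  have hext := fun f hf => exists_cyclic_extension hTA hTB htA htB hI hψ hψi f hf
  let C' : NNReal := ⟨‖φB‖ * (K * (‖iL‖ * C)) ^ (n + 1), by positivity⟩
  obtain ⟨hinj, hclosed⟩ := injective_and_isClosed_range_of_cyclic_dual_extension tB tA I Itil hItil
    (C := C') fun f hf hf1 => by
      obtain ⟨g, hg, hgt, hgI, -⟩ := hext f hf
      exact ⟨g, hgt, hgI, hg.trans (mul_le_of_le_one_left C'.2 hf1)⟩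
  refine ⟨hinj, hclosed, fun f hf => ?_⟩
  obtain ⟨g, -, hgt, hgI, hlim⟩ := hext f hf
  exact ⟨g, hgt, hgI, hlim⟩

/-- Lemma 3.7: For an extension 0 → B →^i A →^j D → 0 of Banach
algebras where B has a right bounded approximate identity (e_α), the induced map
ĩ_n : CC_n(B) → CC_n(A) is injective with closed range; moreover every
f ∈ (B^⊗̂(n+1))* vanishing on Im(id − t_n) extends to a bounded functional g on
A^⊗̂(n+1) vanishing on Im(id − t_n), given on elementary tensors by the ultrafilter
limit g(a₀ ⊗ ⋯ ⊗ a_n) = lim_{α→U} f(i⁻¹(a₀ i(e_α)) ⊗ ⋯ ⊗ i⁻¹(a_n i(e_α))), and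
satisfying (i^⊗̂(n+1))* g = f. -/
theorem cyclic_quotient_map_injective_closed_range
    {B A D : Type*}
    [NormedRing B] [NormedAlgebra ℝ B] [CompleteSpace B]
    [NormedRing A] [NormedAlgebra ℝ A] [CompleteSpace A]
    [NormedRing D] [NormedAlgebra ℝ D] [CompleteSpace D]
    (i : B →ₐ[ℝ] A) (j : A →ₐ[ℝ] D)
    (hi_cont : Continuous i) (hj_cont : Continuous j)
    (hi : Function.Injective i) (hj : Function.Surjective j)
    (hexact : ∀ a : A, j a = 0 ↔ ∃ b, i b = a)
    -- the right bounded approximate identity and an ultrafilter refining the net filter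
    {ι : Type} (l : Filter ι) [l.NeBot] (e : ι → B)
    (hbdd : ∃ C : ℝ, ∀ α, ‖e α‖ ≤ C)
    (hbai : ∀ b : B, Tendsto (fun α => b * e α) l (nhds b))
    (U : Ultrafilter ι) (hU : l ≤ ↑U)
    (n : ℕ)
    {TB TA : Type*}
    [NormedAddCommGroup TB] [NormedSpace ℝ TB] [CompleteSpace TB]
    [NormedAddCommGroup TA] [NormedSpace ℝ TA] [CompleteSpace TA]
    (φB : ContinuousMultilinearMap ℝ (fun _ : Fin (n + 1) => B) TB)
    (hTB : IsProjectiveTensorPower B (n + 1) TB φB)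
    (φA : ContinuousMultilinearMap ℝ (fun _ : Fin (n + 1) => A) TA)
    (hTA : IsProjectiveTensorPower A (n + 1) TA φA)
    -- the signed cyclic operators
    (tB : TB →L[ℝ] TB)
    (htB : ∀ v : Fin (n + 1) → B, tB (φB v) = ((-1 : ℝ) ^ n) • φB (cyclicShift v))
    (tA : TA →L[ℝ] TA)
    (htA : ∀ v : Fin (n + 1) → A, tA (φA v) = ((-1 : ℝ) ^ n) • φA (cyclicShift v))
    -- the map i^⊗̂(n+1)
    (I : TB →L[ℝ] TA) (hI : ∀ v : Fin (n + 1) → B, I (φB v) = φA fun k => i (v k))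
    -- the induced map ĩ_n between the cyclic quotient spaces
    (Itil : (TB ⧸ (LinearMap.range ((ContinuousLinearMap.id ℝ TB - tB : TB →L[ℝ] TB) : TB →ₗ[ℝ] TB)).topologicalClosure) →ₗ[ℝ]
            (TA ⧸ (LinearMap.range ((ContinuousLinearMap.id ℝ TA - tA : TA →L[ℝ] TA) : TA →ₗ[ℝ] TA)).topologicalClosure))
    (hItil : ∀ x : TB, Itil (Submodule.Quotient.mk x) = Submodule.Quotient.mk (I x)) :
    Function.Injective Itil ∧ IsClosed (Set.range Itil) ∧
    ∀ f : StrongDual ℝ TB, (∀ x : TB, f (x - tB x) = 0) →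
      ∃ g : StrongDual ℝ TA,
        (∀ x : TA, g (x - tA x) = 0) ∧
        (∀ x : TB, g (I x) = f x) ∧
        (∀ v : Fin (n + 1) → A,
          Tendsto
            (fun α => f (φB fun k => Function.invFun i (v k * i (e α))))
            (U : Filter ι) (nhds (g (φA v)))) :=
  cyclic_quotient_map_injective_closed_range_general i j hi_cont hj_cont hi hexact l e hbdd hbai U
    hU n φB hTB φA hTA tB htB tA htA I hI Itil hItil

end
end

section
/- Let A be a Banach algebra with a left or right bounded approximate identity. Then the Banach Bar cohomology groups HR^n(A) vanish for all n ≥ 0; i.e., the dual of the bar complex 0 → A* →^{dr_0*} (A ⊗̂ A)* → (A^⊗̂3)* → ⋯ is exact. -/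
open NormedSpace Filter

noncomputable section

/-- The k-th face of an elementary (n+2)-tensor: a₀ ⊗ ⋯ ⊗ a_k a_{k+1} ⊗ ⋯ ⊗ a_{n+1}. -/
def hochschildFace {A : Type*} [Mul A] {n : ℕ} (v : Fin (n + 2) → A) (k : Fin (n + 1)) :
    Fin (n + 1) → A := fun m =>
  if (m : ℕ) < (k : ℕ) then v m.castSucc
  else if (m : ℕ) = (k : ℕ) then v k.castSucc * v k.succ
  else v m.succ

/-- A Banach algebra has a left or right bounded approximate identity. -/
def HasBoundedApproxIdentity (A : Type*) [NormedRing A] : Prop :=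
  ∃ (ι : Type) (l : Filter ι) (e : ι → A), l.NeBot ∧
    (∃ C : ℝ, ∀ α, ‖e α‖ ≤ C) ∧
    ((∀ a : A, Tendsto (fun α => a * e α) l (nhds a)) ∨
     (∀ a : A, Tendsto (fun α => e α * a) l (nhds a)))

/-!
A bounded approximate identity `(e α)` yields uniformly bounded operators `s α = e α ⊗ -`
(or `± - ⊗ e α`) on the bar complex with `d ∘ s α + s α ∘ d` equal to multiplication of the
outer factor by `e α`, which tends to the identity on elementary tensors. For a cocycle `g`,
the functionals `g ∘ s α` stay in a ball of the dual, so by Banach–Alaoglu they have a weak-*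
limit `f` along an ultrafilter, and `f ∘ d = lim g ∘ (d ∘ s α + s α ∘ d) = g` on elementary
tensors, hence everywhere. In degree `0` the same limit shows that `d 0` has dense range.
-/

open Function Topology

theorem Continuous.tendsto_update {ι X Y κ : Type*} [DecidableEq ι] [TopologicalSpace X]
    [TopologicalSpace Y] {f : (ι → X) → Y} (hf : Continuous f) (v : ι → X) (i : ι)
    {l : Filter κ} {x : κ → X} (hx : Tendsto x l (𝓝 (v i))) :
    Tendsto (fun α => f (Function.update v i (x α))) l (𝓝 (f v)) := by
  have h := (hf.tendsto _).comp ((tendsto_const_nhds (x := v)).update i hx)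
  rwa [Function.update_eq_self] at h

section DualComplex

variable {E F G : Type*} [NormedAddCommGroup E] [NormedSpace ℝ E] [NormedAddCommGroup F]
  [NormedSpace ℝ F] [NormedAddCommGroup G] [NormedSpace ℝ G]

theorem StrongDual.exists_tendsto_apply_of_norm_le {ι : Type*} (U : Ultrafilter ι)
    (g : ι → StrongDual ℝ E) {K : ℝ} (hg : ∀ α, ‖g α‖ ≤ K) :
    ∃ f : StrongDual ℝ E, ∀ x, Tendsto (fun α => g α x) U (𝓝 (f x)) := by
  have hball : (U.map (fun α => StrongDual.toWeakDual (g α)) : Filter (WeakDual ℝ E)) ≤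
      𝓟 (WeakDual.toStrongDual ⁻¹' Metric.closedBall 0 K) :=
    le_principal_iff.mpr <| mem_map.mpr <| univ_mem' fun α => by simpa using hg α
  obtain ⟨f, -, hf⟩ := (WeakDual.isCompact_closedBall 0 K).ultrafilter_le_nhds _ hball
  exact ⟨WeakDual.toStrongDual f, fun x => ((WeakDual.eval_continuous x).tendsto f).comp hf⟩

theorem ContinuousLinearMap.denseRange_of_subset_closure (d : F →L[ℝ] E) {D : Set E}
    (hD : Dense (Submodule.span ℝ D : Set E)) (hDd : D ⊆ closure (Set.range d)) :
    DenseRange d := by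
  have hspan : Submodule.span ℝ D ≤ (LinearMap.range (d : F →ₗ[ℝ] E)).topologicalClosure :=
    Submodule.span_le.mpr hDd
  exact dense_closure.mp (hD.mono hspan)

theorem DenseRange.strongDual_comp_injective {d : F →L[ℝ] E} (hd : DenseRange d) :
    Injective fun f : StrongDual ℝ E => f.comp d := fun f₁ f₂ h =>
  DFunLike.coe_injective <| hd.equalizer f₁.continuous f₂.continuous <| congrArg DFunLike.coe h

theorem StrongDual.exists_comp_eq_of_approx_homotopy {ι : Type*} {l : Filter ι} [l.NeBot]
    (d : F →L[ℝ] E) (d' : G →L[ℝ] F) {D : Set F} (hD : Dense (Submodule.span ℝ D : Set F))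
    (s : ι → E →L[ℝ] F) {K : ℝ} (hs : ∀ α, ‖s α‖ ≤ K) (s' : ι → F → G)
    (hss' : ∀ x ∈ D, Tendsto (fun α => d' (s' α x) + s α (d x)) l (𝓝 x))
    (g : StrongDual ℝ F) (hg : g.comp d' = 0) : ∃ f : StrongDual ℝ E, f.comp d = g := by
  obtain ⟨f, hf⟩ := StrongDual.exists_tendsto_apply_of_norm_le (Ultrafilter.of l)
    (fun α => g.comp (s α)) (K := ‖g‖ * K) fun α =>
      (g.opNorm_comp_le _).trans (mul_le_mul_of_nonneg_left (hs α) (norm_nonneg g))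
  refine ⟨f, ContinuousLinearMap.ext_on hD fun x hx => ?_⟩
  have hgs : Tendsto (fun α => g (s α (d x))) l (𝓝 (g x)) := by
    have hgd : ∀ y, g (d' y) = 0 := fun y => by simpa using DFunLike.congr_fun hg y
    simpa [Function.comp_def, hgd] using (g.continuous.tendsto x).comp (hss' x hx)
  exact tendsto_nhds_unique (hf (d x)) (hgs.mono_left (Ultrafilter.of_le l))

end DualComplex

structure IsApproxContraction {E : ℕ → Type*} [∀ n, NormedAddCommGroup (E n)]
    [∀ n, NormedSpace ℝ (E n)] (d : ∀ n, E (n + 1) →L[ℝ] E n) (D : ∀ n, Set (E n))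
    {ι : Type*} (l : Filter ι) (s : ι → ∀ n, E n →L[ℝ] E (n + 1)) : Prop where
  bounded : ∀ n, ∃ K, ∀ α, ‖s α n‖ ≤ K
  tendsto_zero : ∀ x ∈ D 0, Tendsto (fun α => d 0 (s α 0 x)) l (𝓝 x)
  tendsto_succ : ∀ n, ∀ x ∈ D (n + 1),
    Tendsto (fun α => d (n + 1) (s α (n + 1) x) + s α n (d n x)) l (𝓝 x)

theorem IsApproxContraction.dual_exact {E : ℕ → Type*} [∀ n, NormedAddCommGroup (E n)]
    [∀ n, NormedSpace ℝ (E n)] {d : ∀ n, E (n + 1) →L[ℝ] E n} {D : ∀ n, Set (E n)}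
    {ι : Type*} {l : Filter ι} [l.NeBot] {s : ι → ∀ n, E n →L[ℝ] E (n + 1)}
    (h : IsApproxContraction d D l s) (hD : ∀ n, Dense (Submodule.span ℝ (D n) : Set (E n))) :
    Injective (fun f : StrongDual ℝ (E 0) => f.comp (d 0)) ∧
      ∀ n (g : StrongDual ℝ (E (n + 1))), g.comp (d (n + 1)) = 0 →
        ∃ f : StrongDual ℝ (E n), f.comp (d n) = g := by
  refine ⟨DenseRange.strongDual_comp_injective <| (d 0).denseRange_of_subset_closure (hD 0)
    fun x hx => mem_closure_of_tendsto (h.tendsto_zero x hx) (.of_forall fun _ => ⟨_, rfl⟩),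
    fun n g hg => ?_⟩
  obtain ⟨K, hK⟩ := h.bounded n
  exact StrongDual.exists_comp_eq_of_approx_homotopy (d n) (d (n + 1)) (hD (n + 1))
    (fun α => s α n) hK (fun α => s α (n + 1)) (h.tendsto_succ n) g hg

section HochschildFace

variable {A M : Type*} [Mul A] [AddCommGroup M] [Module ℝ M]

theorem hochschildFace_cons_zero {n : ℕ} (b : A) (v : Fin (n + 1) → A) :
    hochschildFace (Fin.cons b v) 0 = update v 0 (b * v 0) := by
  funext m
  cases m using Fin.cases with
  | zero => simp [hochschildFace]
  | succ i => simp [hochschildFace, Fin.succ_ne_zero]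

theorem hochschildFace_cons_succ {n : ℕ} (b : A) (v : Fin (n + 2) → A) (k : Fin (n + 1)) :
    hochschildFace (Fin.cons b v) k.succ = Fin.cons b (hochschildFace v k) := by
  funext m
  cases m using Fin.cases with
  | zero => simp [hochschildFace]
  | succ i =>
    simp only [hochschildFace, Fin.cons_succ, Fin.val_succ, add_lt_add_iff_right,
      add_left_inj, ← Fin.succ_castSucc]

theorem hochschildFace_snoc_castSucc {n : ℕ} (b : A) (v : Fin (n + 2) → A) (k : Fin (n + 1)) :
    hochschildFace (Fin.snoc v b) k.castSucc = Fin.snoc (hochschildFace v k) b := by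
  funext m
  cases m using Fin.lastCases with
  | last =>
    have hk : ¬ n + 1 < (k : ℕ) ∧ n + 1 ≠ k := by omega
    simp [hochschildFace, hk, Fin.succ_last]
  | cast i =>
    simp only [hochschildFace, Fin.val_castSucc, Fin.snoc_castSucc, Fin.succ_castSucc]

theorem hochschildFace_snoc_last {n : ℕ} (b : A) (v : Fin (n + 1) → A) :
    hochschildFace (Fin.snoc v b) (Fin.last n) = update v (Fin.last n) (v (Fin.last n) * b) := by
  funext m
  cases m using Fin.lastCases with
  | last => simp [hochschildFace, Fin.succ_last]
  | cast i => simp [hochschildFace, (Fin.castSucc_lt_last i).ne]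

theorem sum_hochschildFace_cons {n : ℕ} (F : (Fin (n + 2) → A) → M) (b : A)
    (v : Fin (n + 2) → A) :
    ∑ k : Fin (n + 2), (-1 : ℝ) ^ (k : ℕ) • F (hochschildFace (Fin.cons b v) k) +
        ∑ k : Fin (n + 1), (-1 : ℝ) ^ (k : ℕ) • F (Fin.cons b (hochschildFace v k)) =
      F (update v 0 (b * v 0)) := by
  simp only [Fin.sum_univ_succ (n := n + 1), hochschildFace_cons_zero, hochschildFace_cons_succ,
    Fin.val_zero, Fin.val_succ, pow_zero, one_smul, pow_succ, mul_neg_one, neg_smul,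
    Finset.sum_neg_distrib, neg_add_cancel_right]

theorem sum_hochschildFace_snoc {n : ℕ} (F : (Fin (n + 2) → A) → M) (b : A)
    (v : Fin (n + 2) → A) :
    ∑ k : Fin (n + 2), (-1 : ℝ) ^ (k : ℕ) • F (hochschildFace (Fin.snoc v b) k) =
      ∑ k : Fin (n + 1), (-1 : ℝ) ^ (k : ℕ) • F (Fin.snoc (hochschildFace v k) b) +
        (-1 : ℝ) ^ (n + 1) • F (update v (Fin.last _) (v (Fin.last _) * b)) := by
  simp only [Fin.sum_univ_castSucc (n := n + 1), hochschildFace_snoc_castSucc,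
    hochschildFace_snoc_last, Fin.val_castSucc, Fin.val_last]

end HochschildFace

namespace IsProjectiveTensorPower

variable {A : Type*} [NormedAddCommGroup A] [NormedSpace ℝ A] {n : ℕ} {T : Type*}
  [NormedAddCommGroup T] [NormedSpace ℝ T] [CompleteSpace T]
  {φ : ContinuousMultilinearMap ℝ (fun _ : Fin n => A) T}
  {W : Type} [NormedAddCommGroup W] [NormedSpace ℝ W] [CompleteSpace W]

theorem dense_span_range (hT : IsProjectiveTensorPower A n T φ) :
    Dense (Submodule.span ℝ (Set.range φ) : Set T) :=
  Submodule.dense_iff_topologicalClosure_eq_top.mpr hT.dense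

theorem exists_map_cons (hT : IsProjectiveTensorPower A n T φ)
    (ψ : ContinuousMultilinearMap ℝ (fun _ : Fin (n + 1) => A) W) (b : A) :
    ∃ g : T →L[ℝ] W, (∀ v, g (φ v) = ψ (Fin.cons b v)) ∧ ‖g‖ ≤ ‖ψ‖ * ‖b‖ := by
  obtain ⟨g, hg, hgn⟩ := hT.lift W (ψ.curryLeft b)
  exact ⟨g, hg, hgn ▸ ContinuousMultilinearMap.opNorm_le_bound (by positivity)
    (ψ.norm_map_cons_le b)⟩

theorem exists_map_snoc (hT : IsProjectiveTensorPower A n T φ)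
    (ψ : ContinuousMultilinearMap ℝ (fun _ : Fin (n + 1) => A) W) (b : A) :
    ∃ g : T →L[ℝ] W, (∀ v, g (φ v) = ψ (Fin.snoc v b)) ∧ ‖g‖ ≤ ‖ψ‖ * ‖b‖ := by
  obtain ⟨g, hg, hgn⟩ :=
    hT.lift W ((ContinuousLinearMap.apply ℝ W b).compContinuousMultilinearMap ψ.curryRight)
  refine ⟨g, hg, hgn ▸ ContinuousMultilinearMap.opNorm_le_bound (by positivity) fun v => ?_⟩
  calc ‖ψ (Fin.snoc v b)‖ ≤ ‖ψ‖ * (∏ i, ‖v i‖) * ‖b‖ := ψ.norm_map_snoc_le v b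
    _ = ‖ψ‖ * ‖b‖ * ∏ i, ‖v i‖ := by ring

end IsProjectiveTensorPower

section BarComplex

variable {A : Type*} [NormedRing A] [NormedAlgebra ℝ A] {T : ℕ → Type}
  [∀ n, NormedAddCommGroup (T n)] [∀ n, NormedSpace ℝ (T n)] [∀ n, CompleteSpace (T n)]
  {φ : ∀ n, ContinuousMultilinearMap ℝ (fun _ : Fin (n + 1) => A) (T n)}
  {dr : ∀ n, T (n + 1) →L[ℝ] T n} {ι : Type*} {l : Filter ι} {e : ι → A} {C : ℝ}

theorem exists_cons_homotopy (hT : ∀ n, IsProjectiveTensorPower A (n + 1) (T n) (φ n))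
    (hdr : ∀ n (v : Fin (n + 2) → A),
      dr n (φ (n + 1) v) = ∑ k : Fin (n + 1), ((-1 : ℝ) ^ (k : ℕ)) • φ n (hochschildFace v k))
    (b : A) :
    ∃ s : ∀ n, T n →L[ℝ] T (n + 1), (∀ n, ‖s n‖ ≤ ‖φ (n + 1)‖ * ‖b‖) ∧
      (∀ v, dr 0 (s 0 (φ 0 v)) = φ 0 (update v 0 (b * v 0))) ∧
      ∀ n v, dr (n + 1) (s (n + 1) (φ (n + 1) v)) + s n (dr n (φ (n + 1) v)) =
        φ (n + 1) (update v 0 (b * v 0)) := by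
  choose s hs hsn using fun n => (hT n).exists_map_cons (φ (n + 1)) b
  refine ⟨s, hsn, fun v => ?_, fun n v => ?_⟩
  · simp [hs, hdr, hochschildFace_cons_zero]
  · simp only [hs, hdr, map_sum, map_smul]
    exact sum_hochschildFace_cons (φ (n + 1)) b v

theorem exists_snoc_homotopy (hT : ∀ n, IsProjectiveTensorPower A (n + 1) (T n) (φ n))
    (hdr : ∀ n (v : Fin (n + 2) → A),
      dr n (φ (n + 1) v) = ∑ k : Fin (n + 1), ((-1 : ℝ) ^ (k : ℕ)) • φ n (hochschildFace v k))
    (b : A) :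
    ∃ s : ∀ n, T n →L[ℝ] T (n + 1), (∀ n, ‖s n‖ ≤ ‖φ (n + 1)‖ * ‖b‖) ∧
      (∀ v, dr 0 (s 0 (φ 0 v)) = φ 0 (update v 0 (v 0 * b))) ∧
      ∀ n v, dr (n + 1) (s (n + 1) (φ (n + 1) v)) + s n (dr n (φ (n + 1) v)) =
        φ (n + 1) (update v (Fin.last _) (v (Fin.last _) * b)) := by
  choose g hg hgn using fun n => (hT n).exists_map_snoc (φ (n + 1)) b
  -- the sign `(-1) ^ n` compensates the sign `(-1) ^ (n + 1)` of the last face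
  refine ⟨fun n => (-1 : ℝ) ^ n • g n, fun n => by simpa [norm_smul] using hgn n,
    fun v => ?_, fun n v => ?_⟩
  · simpa [hg, hdr] using congrArg (φ 0) (hochschildFace_snoc_last b v)
  · have hgd : g n (dr n (φ (n + 1) v)) =
        ∑ k : Fin (n + 1), (-1 : ℝ) ^ (k : ℕ) • φ (n + 1) (Fin.snoc (hochschildFace v k) b) := by
      simp only [hdr, map_sum, map_smul, hg]
    have hsq : (-1 : ℝ) ^ (n + 1) * (-1) ^ (n + 1) = 1 := by rw [← mul_pow]; norm_num
    rw [_root_.smul_apply, _root_.smul_apply, map_smul, hg, hdr, sum_hochschildFace_snoc, hgd]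
    linear_combination (norm := module)
      hsq • φ (n + 1) (update v (Fin.last _) (v (Fin.last _) * b))

theorem exists_isApproxContraction_of_left
    (hT : ∀ n, IsProjectiveTensorPower A (n + 1) (T n) (φ n))
    (hdr : ∀ n (v : Fin (n + 2) → A),
      dr n (φ (n + 1) v) = ∑ k : Fin (n + 1), ((-1 : ℝ) ^ (k : ℕ)) • φ n (hochschildFace v k))
    (hC : ∀ α, ‖e α‖ ≤ C) (he : ∀ a, Tendsto (fun α => e α * a) l (𝓝 a)) :
    ∃ s, IsApproxContraction dr (fun n => Set.range (φ n)) l s := by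
  choose s hsn hs0 hs using fun α => exists_cons_homotopy hT hdr (e α)
  refine ⟨s, fun n => ⟨‖φ (n + 1)‖ * C, fun α => (hsn α n).trans (by gcongr; exact hC α)⟩,
    ?_, ?_⟩
  · rintro _ ⟨v, rfl⟩
    simpa only [hs0] using (map_continuous (φ 0)).tendsto_update v 0 (he (v 0))
  · rintro n _ ⟨v, rfl⟩
    simpa only [hs] using (map_continuous (φ (n + 1))).tendsto_update v 0 (he (v 0))

theorem exists_isApproxContraction_of_right
    (hT : ∀ n, IsProjectiveTensorPower A (n + 1) (T n) (φ n))
    (hdr : ∀ n (v : Fin (n + 2) → A),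
      dr n (φ (n + 1) v) = ∑ k : Fin (n + 1), ((-1 : ℝ) ^ (k : ℕ)) • φ n (hochschildFace v k))
    (hC : ∀ α, ‖e α‖ ≤ C) (he : ∀ a, Tendsto (fun α => a * e α) l (𝓝 a)) :
    ∃ s, IsApproxContraction dr (fun n => Set.range (φ n)) l s := by
  choose s hsn hs0 hs using fun α => exists_snoc_homotopy hT hdr (e α)
  refine ⟨s, fun n => ⟨‖φ (n + 1)‖ * C, fun α => (hsn α n).trans (by gcongr; exact hC α)⟩,
    ?_, ?_⟩
  · rintro _ ⟨v, rfl⟩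
    simpa only [hs0] using (map_continuous (φ 0)).tendsto_update v 0 (he (v 0))
  · rintro n _ ⟨v, rfl⟩
    simpa only [hs] using (map_continuous (φ (n + 1))).tendsto_update v _ (he (v (Fin.last _)))

end BarComplex

theorem bar_cohomology_vanishes_of_bounded_approximate_identity_general
    {A : Type*} [NormedRing A] [NormedAlgebra ℝ A]
    (hbai : HasBoundedApproxIdentity A)
    -- the bar complex: C n = A^⊗̂(n+1)
    (T : ℕ → Type)
    [∀ n, NormedAddCommGroup (T n)] [∀ n, NormedSpace ℝ (T n)] [∀ n, CompleteSpace (T n)]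
    (φ : ∀ n, ContinuousMultilinearMap ℝ (fun _ : Fin (n + 1) => A) (T n))
    (hT : ∀ n, IsProjectiveTensorPower A (n + 1) (T n) (φ n))
    (dr : ∀ n, T (n + 1) →L[ℝ] T n)
    (hdr : ∀ n (v : Fin (n + 2) → A),
      dr n (φ (n + 1) v) = ∑ k : Fin (n + 1), ((-1 : ℝ) ^ (k : ℕ)) • φ n (hochschildFace v k)) :
    -- exactness of the dual complex: HR⁰(A) = 0 …
    Function.Injective (fun f : StrongDual ℝ (T 0) => f.comp (dr 0)) ∧
    -- … and HR^{n+1}(A) = 0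
    (∀ n (g : StrongDual ℝ (T (n + 1))), g.comp (dr (n + 1)) = 0 →
      ∃ f : StrongDual ℝ (T n), f.comp (dr n) = g) := by
  obtain ⟨ι, l, e, hl, ⟨C, hC⟩, hright | hleft⟩ := hbai
  · obtain ⟨s, hs⟩ := exists_isApproxContraction_of_right hT hdr hC hright
    exact hs.dual_exact fun n => (hT n).dense_span_range
  · obtain ⟨s, hs⟩ := exists_isApproxContraction_of_left hT hdr hC hleft
    exact hs.dual_exact fun n => (hT n).dense_span_range

/-- Helemskii, Theorem 16 of [He2]: If a Banach algebra A has a left or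
right bounded approximate identity, then the Banach Bar cohomology groups HR^n(A)
vanish for all n ≥ 0, i.e. the dual of the bar complex
0 → (C₀)* → (C₁)* → (C₂)* → ⋯  (C_n = A^⊗̂(n+1)) is exact. -/
theorem bar_cohomology_vanishes_of_bounded_approximate_identity
    {A : Type*} [NormedRing A] [NormedAlgebra ℝ A] [CompleteSpace A]
    (hbai : HasBoundedApproxIdentity A)
    -- the bar complex: C n = A^⊗̂(n+1)
    (T : ℕ → Type)
    [∀ n, NormedAddCommGroup (T n)] [∀ n, NormedSpace ℝ (T n)] [∀ n, CompleteSpace (T n)]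
    (φ : ∀ n, ContinuousMultilinearMap ℝ (fun _ : Fin (n + 1) => A) (T n))
    (hT : ∀ n, IsProjectiveTensorPower A (n + 1) (T n) (φ n))
    (dr : ∀ n, T (n + 1) →L[ℝ] T n)
    (hdr : ∀ n (v : Fin (n + 2) → A),
      dr n (φ (n + 1) v) = ∑ k : Fin (n + 1), ((-1 : ℝ) ^ (k : ℕ)) • φ n (hochschildFace v k)) :
    -- exactness of the dual complex: HR⁰(A) = 0 …
    Function.Injective (fun f : StrongDual ℝ (T 0) => f.comp (dr 0)) ∧
    -- … and HR^{n+1}(A) = 0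
    (∀ n (g : StrongDual ℝ (T (n + 1))), g.comp (dr (n + 1)) = 0 →
      ∃ f : StrongDual ℝ (T n), f.comp (dr n) = g) :=
  bar_cohomology_vanishes_of_bounded_approximate_identity_general hbai T φ hT dr hdr

end
end
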